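/- Unweighted gadgetization for K_t-subgraph cover: let F and G be compatible boundaried graphs, let v be a common boundary vertex, and let (R, S) be an annotation of a set X ⊇ (B_F ∩ B_G) ∖ {v} with v ∉ X. Let s⁺ (respectively s⁻) be the minimum size of a K_t-subgraph cover of G respecting the annotation with v forced into (resp. out of) the solution, and let s̄ = |S ∩ B_F ∩ B_G|. Then the minimum size of a K_t-subgraph cover of F ⊕ G respecting (R, S) equals s⁺ + opt(F with v forced in) − s̄ − 1 if s⁺ ≤ s⁻, and equals s⁻ + opt(F with annotation (R,S)) − s̄ otherwise. Moreover s⁺ ≤ s⁻ + 1 always holds. -/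

import Mathlib

/-- The optimum value of the annotated (unweighted) `K_t`-subgraph cover problem on
the part of the graph `W` induced by the vertex set `U`: the minimum size of a set
`S'` of vertices of `U` containing the forced vertices `S ∩ U`, avoiding the
forbidden vertices `R`, and whose removal leaves the part of `W` on `U` `K_t`-free.
The value is `⊤` if no such set exists. -/
noncomputable def ktCoverOpt {V : Type} (t : ℕ) (W : SimpleGraph V)
    (U R S : Set V) : ℕ∞ :=
  sInf {n : ℕ∞ | ∃ S' : Set V, S' ⊆ U ∧ S ∩ U ⊆ S' ∧ S' ∩ R = ∅ ∧
    (W.induce (U \ S')).CliqueFree t ∧ n = (S'.ncard : ℕ∞)}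

open SimpleGraph in
lemma ktc_cf_iff {V : Type} (W : SimpleGraph V) (A : Set V) (t : ℕ) :
    (W.induce A).CliqueFree t ↔ ∀ K : Finset V, ↑K ⊆ A → ¬ W.IsNClique t K := by
  constructor
  · intro h K hKA hK
    refine h (K.attach.map ⟨fun x => (⟨x.1, hKA x.2⟩ : A), ?_⟩) ⟨?_, ?_⟩
    · intro x y hxy; have hv := congrArg Subtype.val hxy; exact Subtype.ext hv
    · rintro ⟨x, hx⟩ hxs ⟨y, hy⟩ hys hne
      simp only [Finset.mem_map, Finset.mem_attach, true_and, Function.Embedding.coeFn_mk,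
        Finset.mem_coe] at hxs hys
      obtain ⟨⟨x', hx'⟩, hx2⟩ := hxs
      obtain ⟨⟨y', hy'⟩, hy2⟩ := hys
      have hx3 : x' = x := congrArg Subtype.val hx2
      have hy3 : y' = y := congrArg Subtype.val hy2
      subst hx3 hy3
      exact hK.1 hx' hy' (fun hc => hne (by simp [hc]))
    · simp [hK.2]
  · intro h s hs
    refine h (s.map ⟨Subtype.val, Subtype.val_injective⟩) ?_ ⟨?_, ?_⟩
    · intro x hx; simp only [Finset.coe_map, Set.mem_image, Finset.mem_coe] at hx
      obtain ⟨⟨y, hy⟩, _, rfl⟩ := hx; exact hy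
    · rintro x hx y hy hne
      simp only [Finset.coe_map, Set.mem_image, Finset.mem_coe,
        Function.Embedding.coeFn_mk] at hx hy
      obtain ⟨x', hx', rfl⟩ := hx
      obtain ⟨y', hy', rfl⟩ := hy
      exact hs.1 hx' hy' (fun hc => hne (congrArg Subtype.val hc))
    · simp [hs.2]

lemma ktc_cf_mono {V : Type} (W : SimpleGraph V) {A B : Set V} (t : ℕ) (hAB : A ⊆ B)
    (h : (W.induce B).CliqueFree t) : (W.induce A).CliqueFree t := by
  rw [ktc_cf_iff] at h ⊢
  exact fun K hK => h K (hK.trans hAB)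

lemma ktc_cf_glue {V : Type} (W : SimpleGraph V) {L R' A : Set V} (t : ℕ)
    (hsep : L ∪ R' = Set.univ)
    (hnoedge : ∀ ⦃u u' : V⦄, W.Adj u u' → (u ∈ L ∧ u' ∈ L) ∨ (u ∈ R' ∧ u' ∈ R'))
    (hL : (W.induce (A ∩ L)).CliqueFree t) (hR : (W.induce (A ∩ R')).CliqueFree t) :
    (W.induce A).CliqueFree t := by
  rw [ktc_cf_iff] at hL hR ⊢
  intro K hKA hK
  by_cases hcase : (K : Set V) ⊆ L
  · exact hL K (fun x hx => ⟨hKA hx, hcase hx⟩) hK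
  · rw [Set.not_subset] at hcase
    obtain ⟨u, huK, huL⟩ := hcase
    have huR : u ∈ R' := by
      rcases Set.eq_univ_iff_forall.mp hsep u with h | h
      · exact absurd h huL
      · exact h
    refine hR K (fun x hx => ⟨hKA hx, ?_⟩) hK
    by_cases hxu : x = u
    · exact hxu ▸ huR
    · have hadj : W.Adj u x := hK.1 huK hx (fun hc => hxu hc.symm)
      rcases hnoedge hadj with ⟨h1, _⟩ | ⟨_, h2⟩
      · exact absurd h1 huL
      · exact h2

/-- Feasibility predicate for the annotated cover problem. -/
def ktcFeas {V : Type} (t : ℕ) (W : SimpleGraph V) (U R S S' : Set V) : Prop :=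
  S' ⊆ U ∧ S ∩ U ⊆ S' ∧ S' ∩ R = ∅ ∧ (W.induce (U \ S')).CliqueFree t

lemma ktcOpt_eq {V : Type} (t : ℕ) (W : SimpleGraph V) (U R S : Set V) :
    ktCoverOpt t W U R S
      = sInf {n : ℕ∞ | ∃ S', ktcFeas t W U R S S' ∧ n = (S'.ncard : ℕ∞)} := by
  unfold ktCoverOpt ktcFeas
  congr 1
  ext n
  constructor
  · rintro ⟨S', h1, h2, h3, h4, h5⟩; exact ⟨S', ⟨h1, h2, h3, h4⟩, h5⟩
  · rintro ⟨S', ⟨h1, h2, h3, h4⟩, h5⟩; exact ⟨S', h1, h2, h3, h4, h5⟩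

lemma ktcOpt_le {V : Type} {t : ℕ} {W : SimpleGraph V} {U R S S' : Set V}
    (h : ktcFeas t W U R S S') : ktCoverOpt t W U R S ≤ (S'.ncard : ℕ∞) := by
  rw [ktcOpt_eq]; exact sInf_le ⟨S', h, rfl⟩

lemma ktcOpt_attain {V : Type} {t : ℕ} {W : SimpleGraph V} {U R S : Set V}
    (h : ktCoverOpt t W U R S ≠ ⊤) :
    ∃ S', ktcFeas t W U R S S' ∧ ktCoverOpt t W U R S = (S'.ncard : ℕ∞) := by
  rw [ktcOpt_eq] at h ⊢
  have hne : {n : ℕ∞ | ∃ S', ktcFeas t W U R S S' ∧ n = (S'.ncard : ℕ∞)}.Nonempty := by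
    by_contra hc
    rw [Set.not_nonempty_iff_eq_empty] at hc
    rw [hc, sInf_empty] at h
    exact h rfl
  exact csInf_mem hne

lemma ktc_le_add {V : Type} {t : ℕ} {W : SimpleGraph V} {U R S : Set V} {c d : ℕ∞}
    (h : ∀ S', ktcFeas t W U R S S' → d ≤ (S'.ncard : ℕ∞) + c) :
    d ≤ ktCoverOpt t W U R S + c := by
  by_cases htop : ktCoverOpt t W U R S = ⊤
  · rw [htop, top_add]; exact le_top
  · obtain ⟨S', hS', heq⟩ := ktcOpt_attain htop
    rw [heq]; exact h S' hS'

lemma ktcOpt_le_opt {V : Type} {t : ℕ} {W : SimpleGraph V} {U R S U2 R2 S2 : Set V}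
    (h : ∀ S', ktcFeas t W U2 R2 S2 S' → ktCoverOpt t W U R S ≤ (S'.ncard : ℕ∞)) :
    ktCoverOpt t W U R S ≤ ktCoverOpt t W U2 R2 S2 := by
  by_cases htop : ktCoverOpt t W U2 R2 S2 = ⊤
  · rw [htop]; exact le_top
  · obtain ⟨S', hS', heq⟩ := ktcOpt_attain htop
    rw [heq]; exact h S' hS'

lemma ktc_add_cast_sub {a : ℕ∞} {c : ℕ} : a + (c : ℕ∞) - (c : ℕ∞) = a := by
  induction a using ENat.recTopCoe with
  | top => simp [ENat.top_sub_coe]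
  | coe n => rw [← Nat.cast_add, ← ENat.coe_sub, Nat.cast_inj]; omega

/-- Gadgetization for unweighted annotated `K_t`-subgraph cover.  The gluing
`F ⊕ G` of two compatible boundaried graphs is modelled by a graph `W` with a
separation `(L, R')`, the identified boundary being `L ∩ R'`.  Let `v` be a boundary
vertex, and let `(R, S)` be an annotation of a set `X` containing all boundary
vertices except `v`, with `v ∉ X`.  Let `s⁺` (resp. `s⁻`) be the optimum on the `G`
side with `v` forced into (resp. out of) the solution and let `s̄ = |S ∩ L ∩ R'|`.
Then `s⁺ ≤ s⁻ + 1` always holds, and the optimum on `F ⊕ G` equals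
`s⁺ + opt(F, v forced in) - s̄ - 1` if `s⁺ ≤ s⁻`, and `s⁻ + opt(F) - s̄` otherwise. -/
theorem ktCover_gadgetization {V : Type} [Fintype V] (t : ℕ) (W : SimpleGraph V)
    (L R' : Set V) (hsep : L ∪ R' = Set.univ)
    (hnoedge : ∀ ⦃u u' : V⦄, W.Adj u u' → (u ∈ L ∧ u' ∈ L) ∨ (u ∈ R' ∧ u' ∈ R'))
    (v : V) (hv : v ∈ L ∩ R') (X R S : Set V) (hvX : v ∉ X)
    (hBX : (L ∩ R') \ {v} ⊆ X) (hpart : R ∪ S = X) (hdisj : R ∩ S = ∅) :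
    ktCoverOpt t W R' R (S ∪ {v}) ≤ ktCoverOpt t W R' (R ∪ {v}) S + 1 ∧
    (ktCoverOpt t W R' R (S ∪ {v}) ≤ ktCoverOpt t W R' (R ∪ {v}) S →
      ktCoverOpt t W Set.univ R S =
        ktCoverOpt t W R' R (S ∪ {v}) + ktCoverOpt t W L R (S ∪ {v}) -
          ((S ∩ L ∩ R').ncard : ℕ∞) - 1) ∧
    (¬ ktCoverOpt t W R' R (S ∪ {v}) ≤ ktCoverOpt t W R' (R ∪ {v}) S →
      ktCoverOpt t W Set.univ R S =
        ktCoverOpt t W R' (R ∪ {v}) S + ktCoverOpt t W L R S -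
          ((S ∩ L ∩ R').ncard : ℕ∞)) := by
  have vL : v ∈ L := hv.1
  have vR : v ∈ R' := hv.2
  have vnR : v ∉ R := fun h => hvX (hpart ▸ Set.mem_union_left S h)
  have vnS : v ∉ S := fun h => hvX (hpart ▸ Set.mem_union_right R h)
  have hBcl : ∀ x, x ∈ L → x ∈ R' → x ≠ v → x ∈ R ∨ x ∈ S := by
    intro x hxL hxR hxv
    have hx : x ∈ X := hBX ⟨⟨hxL, hxR⟩, hxv⟩
    rw [← hpart] at hx
    exact hx
  set sb : ℕ := (S ∩ L ∩ R').ncard with hsb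
  -- the set S ∩ L ∩ R' is S ∩ (L ∩ R')
  have hassoc : S ∩ L ∩ R' = S ∩ (L ∩ R') := Set.inter_assoc S L R'
  -- Part 1 : gP ≤ gM + 1
  have part1 : ktCoverOpt t W R' R (S ∪ {v}) ≤ ktCoverOpt t W R' (R ∪ {v}) S + 1 := by
    apply ktc_le_add
    rintro S' ⟨h1, h2, h3, h4⟩
    have hvnS' : v ∉ S' := by
      intro hc
      have : v ∈ S' ∩ (R ∪ {v}) := ⟨hc, Or.inr rfl⟩
      rw [h3] at this
      exact this
    have hfeas : ktcFeas t W R' R (S ∪ {v}) (S' ∪ {v}) := by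
      refine ⟨?_, ?_, ?_, ?_⟩
      · rintro x (hx | hx)
        · exact h1 hx
        · exact hx ▸ vR
      · rintro x ⟨hx | hx, hxR'⟩
        · exact Or.inl (h2 ⟨hx, hxR'⟩)
        · exact Or.inr hx
      · rw [Set.eq_empty_iff_forall_notMem]
        rintro x ⟨hx | hx, hxR⟩
        · have : x ∈ S' ∩ (R ∪ {v}) := ⟨hx, Or.inl hxR⟩
          rw [h3] at this; exact this
        · exact vnR (hx ▸ hxR)
      · have hss : R' \ (S' ∪ {v}) ⊆ R' \ S' :=
          fun x hx => ⟨hx.1, fun hc => hx.2 (Or.inl hc)⟩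
        exact ktc_cf_mono W t hss h4
    calc ktCoverOpt t W R' R (S ∪ {v}) ≤ ((S' ∪ {v}).ncard : ℕ∞) := ktcOpt_le hfeas
      _ = (S'.ncard : ℕ∞) + 1 := by
          rw [Set.union_singleton, Set.ncard_insert_of_notMem hvnS' (Set.toFinite S')]
          push_cast; ring
  -- fP ≤ fM + 1
  have hfP_le : ktCoverOpt t W L R (S ∪ {v}) ≤ ktCoverOpt t W L R S + 1 := by
    apply ktc_le_add
    rintro S' ⟨h1, h2, h3, h4⟩
    have hfeas : ktcFeas t W L R (S ∪ {v}) (S' ∪ {v}) := by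
      refine ⟨?_, ?_, ?_, ?_⟩
      · rintro x (hx | hx)
        · exact h1 hx
        · exact hx ▸ vL
      · rintro x ⟨hx | hx, hxL⟩
        · exact Or.inl (h2 ⟨hx, hxL⟩)
        · exact Or.inr hx
      · rw [Set.eq_empty_iff_forall_notMem]
        rintro x ⟨hx | hx, hxR⟩
        · have : x ∈ S' ∩ R := ⟨hx, hxR⟩
          rw [h3] at this; exact this
        · exact vnR (hx ▸ hxR)
      · have hss : L \ (S' ∪ {v}) ⊆ L \ S' :=
          fun x hx => ⟨hx.1, fun hc => hx.2 (Or.inl hc)⟩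
        exact ktc_cf_mono W t hss h4
    calc ktCoverOpt t W L R (S ∪ {v}) ≤ ((S' ∪ {v}).ncard : ℕ∞) := ktcOpt_le hfeas
      _ ≤ (S'.ncard : ℕ∞) + 1 := by
          rw [Set.union_singleton]
          have := Set.ncard_insert_le v S'
          exact_mod_cast this
  -- fM ≤ fP
  have hfM_le : ktCoverOpt t W L R S ≤ ktCoverOpt t W L R (S ∪ {v}) := by
    apply ktcOpt_le_opt
    rintro S' ⟨h1, h2, h3, h4⟩
    exact ktcOpt_le ⟨h1, fun x hx => h2 ⟨Or.inl hx.1, hx.2⟩, h3, h4⟩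
  -- combination lemma, plus version
  have hT4 : ∀ Sg Sf, ktcFeas t W R' R (S ∪ {v}) Sg → ktcFeas t W L R (S ∪ {v}) Sf →
      ktcFeas t W Set.univ R S (Sg ∪ Sf) ∧
        (Sg ∪ Sf).ncard + (sb + 1) = Sg.ncard + Sf.ncard := by
    rintro Sg Sf ⟨hg1, hg2, hg3, hg4⟩ ⟨hf1, hf2, hf3, hf4⟩
    have hI : Sg ∩ Sf = (S ∩ L ∩ R') ∪ {v} := by
      ext x
      constructor
      · rintro ⟨hxg, hxf⟩
        by_cases hxv : x = v
        · exact Or.inr hxv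
        · rcases hBcl x (hf1 hxf) (hg1 hxg) hxv with hxR | hxS
          · exact ((Set.eq_empty_iff_forall_notMem.mp hg3) x ⟨hxg, hxR⟩).elim
          · exact Or.inl ⟨⟨hxS, hf1 hxf⟩, hg1 hxg⟩
      · rintro (⟨⟨hxS, hxL⟩, hxR'⟩ | hx)
        · exact ⟨hg2 ⟨Or.inl hxS, hxR'⟩, hf2 ⟨Or.inl hxS, hxL⟩⟩
        · have hx' : x = v := hx
          subst hx'
          exact ⟨hg2 ⟨Or.inr rfl, vR⟩, hf2 ⟨Or.inr rfl, vL⟩⟩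
    constructor
    · refine ⟨Set.subset_univ _, ?_, ?_, ?_⟩
      · rintro x ⟨hxS, -⟩
        rcases Set.eq_univ_iff_forall.mp hsep x with hxL | hxR'
        · exact Or.inr (hf2 ⟨Or.inl hxS, hxL⟩)
        · exact Or.inl (hg2 ⟨Or.inl hxS, hxR'⟩)
      · rw [Set.eq_empty_iff_forall_notMem]
        rintro x ⟨hx | hx, hxR⟩
        · exact (Set.eq_empty_iff_forall_notMem.mp hg3) x ⟨hx, hxR⟩
        · exact (Set.eq_empty_iff_forall_notMem.mp hf3) x ⟨hx, hxR⟩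
      · apply ktc_cf_glue W t hsep hnoedge
        · have hss : (Set.univ \ (Sg ∪ Sf)) ∩ L ⊆ L \ Sf :=
            fun x hx => ⟨hx.2, fun hc => hx.1.2 (Or.inr hc)⟩
          exact ktc_cf_mono W t hss hf4
        · have hss : (Set.univ \ (Sg ∪ Sf)) ∩ R' ⊆ R' \ Sg :=
            fun x hx => ⟨hx.2, fun hc => hx.1.2 (Or.inl hc)⟩
          exact ktc_cf_mono W t hss hg4
    · have hcard := Set.ncard_union_add_ncard_inter Sg Sf (Set.toFinite Sg) (Set.toFinite Sf)
      have hIcard : (Sg ∩ Sf).ncard = sb + 1 := by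
        rw [hI, Set.union_singleton,
          Set.ncard_insert_of_notMem (fun hc => vnS hc.1.1) (Set.toFinite _)]
      rw [← hIcard]
      exact hcard
  -- combination lemma, minus version
  have hT5 : ∀ Sg Sf, ktcFeas t W R' (R ∪ {v}) S Sg → ktcFeas t W L R S Sf →
      ktcFeas t W Set.univ R S (Sg ∪ Sf) ∧
        (Sg ∪ Sf).ncard + sb = Sg.ncard + Sf.ncard := by
    rintro Sg Sf ⟨hg1, hg2, hg3, hg4⟩ ⟨hf1, hf2, hf3, hf4⟩
    have hvg : v ∉ Sg := by
      intro hc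
      exact (Set.eq_empty_iff_forall_notMem.mp hg3) v ⟨hc, Or.inr rfl⟩
    have hI : Sg ∩ Sf = S ∩ L ∩ R' := by
      ext x
      constructor
      · rintro ⟨hxg, hxf⟩
        have hxv : x ≠ v := fun hc => hvg (hc ▸ hxg)
        rcases hBcl x (hf1 hxf) (hg1 hxg) hxv with hxR | hxS
        · exact ((Set.eq_empty_iff_forall_notMem.mp hg3) x ⟨hxg, Or.inl hxR⟩).elim
        · exact ⟨⟨hxS, hf1 hxf⟩, hg1 hxg⟩
      · rintro ⟨⟨hxS, hxL⟩, hxR'⟩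
        exact ⟨hg2 ⟨hxS, hxR'⟩, hf2 ⟨hxS, hxL⟩⟩
    constructor
    · refine ⟨Set.subset_univ _, ?_, ?_, ?_⟩
      · rintro x ⟨hxS, -⟩
        rcases Set.eq_univ_iff_forall.mp hsep x with hxL | hxR'
        · exact Or.inr (hf2 ⟨hxS, hxL⟩)
        · exact Or.inl (hg2 ⟨hxS, hxR'⟩)
      · rw [Set.eq_empty_iff_forall_notMem]
        rintro x ⟨hx | hx, hxR⟩
        · exact (Set.eq_empty_iff_forall_notMem.mp hg3) x ⟨hx, Or.inl hxR⟩
        · exact (Set.eq_empty_iff_forall_notMem.mp hf3) x ⟨hx, hxR⟩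
      · apply ktc_cf_glue W t hsep hnoedge
        · have hss : (Set.univ \ (Sg ∪ Sf)) ∩ L ⊆ L \ Sf :=
            fun x hx => ⟨hx.2, fun hc => hx.1.2 (Or.inr hc)⟩
          exact ktc_cf_mono W t hss hf4
        · have hss : (Set.univ \ (Sg ∪ Sf)) ∩ R' ⊆ R' \ Sg :=
            fun x hx => ⟨hx.2, fun hc => hx.1.2 (Or.inl hc)⟩
          exact ktc_cf_mono W t hss hg4
    · have hcard := Set.ncard_union_add_ncard_inter Sg Sf (Set.toFinite Sg) (Set.toFinite Sf)
      rw [hI] at hcard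
      exact hcard
  -- splitting lemma
  have hSplitCommon : ∀ Ss : Set V, ktcFeas t W Set.univ R S Ss →
      (Ss ∩ R') ∪ (Ss ∩ L) = Ss ∧ S ⊆ Ss := by
    rintro Ss ⟨-, h2, -, -⟩
    constructor
    · ext x
      constructor
      · rintro (⟨hx, -⟩ | ⟨hx, -⟩) <;> exact hx
      · intro hx
        rcases Set.eq_univ_iff_forall.mp hsep x with hxL | hxR'
        · exact Or.inr ⟨hx, hxL⟩
        · exact Or.inl ⟨hx, hxR'⟩
    · intro x hx; exact h2 ⟨hx, Set.mem_univ x⟩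
  have hSplitP : ∀ Ss : Set V, ktcFeas t W Set.univ R S Ss → v ∈ Ss →
      ktcFeas t W R' R (S ∪ {v}) (Ss ∩ R') ∧ ktcFeas t W L R (S ∪ {v}) (Ss ∩ L) ∧
        (Ss ∩ R').ncard + (Ss ∩ L).ncard = Ss.ncard + (sb + 1) := by
    intro Ss hfeas hvSs
    obtain ⟨hU, hSsub⟩ := hSplitCommon Ss hfeas
    obtain ⟨h1, h2, h3, h4⟩ := hfeas
    have hI : (Ss ∩ R') ∩ (Ss ∩ L) = (S ∩ L ∩ R') ∪ {v} := by
      ext x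
      constructor
      · rintro ⟨⟨hx, hxR'⟩, ⟨-, hxL⟩⟩
        by_cases hxv : x = v
        · exact Or.inr hxv
        · rcases hBcl x hxL hxR' hxv with hxR | hxS
          · exact (((Set.eq_empty_iff_forall_notMem.mp h3)) x ⟨hx, hxR⟩).elim
          · exact Or.inl ⟨⟨hxS, hxL⟩, hxR'⟩
      · rintro (⟨⟨hxS, hxL⟩, hxR'⟩ | hx)
        · exact ⟨⟨hSsub hxS, hxR'⟩, ⟨hSsub hxS, hxL⟩⟩
        · have hx' : x = v := hx
          subst hx'
          exact ⟨⟨hvSs, vR⟩, ⟨hvSs, vL⟩⟩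
    refine ⟨⟨Set.inter_subset_right, ?_, ?_, ?_⟩, ⟨Set.inter_subset_right, ?_, ?_, ?_⟩, ?_⟩
    · rintro x ⟨hx | hx, hxR'⟩
      · exact ⟨hSsub hx, hxR'⟩
      · exact ⟨hx ▸ hvSs, hxR'⟩
    · rw [Set.eq_empty_iff_forall_notMem]
      rintro x ⟨⟨hx, -⟩, hxR⟩
      exact (Set.eq_empty_iff_forall_notMem.mp h3) x ⟨hx, hxR⟩
    · have hss : R' \ (Ss ∩ R') ⊆ Set.univ \ Ss :=
        fun x hx => ⟨Set.mem_univ x, fun hc => hx.2 ⟨hc, hx.1⟩⟩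
      exact ktc_cf_mono W t hss h4
    · rintro x ⟨hx | hx, hxL⟩
      · exact ⟨hSsub hx, hxL⟩
      · exact ⟨hx ▸ hvSs, hxL⟩
    · rw [Set.eq_empty_iff_forall_notMem]
      rintro x ⟨⟨hx, -⟩, hxR⟩
      exact (Set.eq_empty_iff_forall_notMem.mp h3) x ⟨hx, hxR⟩
    · have hss : L \ (Ss ∩ L) ⊆ Set.univ \ Ss :=
        fun x hx => ⟨Set.mem_univ x, fun hc => hx.2 ⟨hc, hx.1⟩⟩
      exact ktc_cf_mono W t hss h4
    · have hcard := Set.ncard_union_add_ncard_inter (Ss ∩ R') (Ss ∩ L)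
        (Set.toFinite _) (Set.toFinite _)
      rw [hU, hI, Set.union_singleton,
        Set.ncard_insert_of_notMem (fun hc => vnS hc.1.1) (Set.toFinite _)] at hcard
      omega
  have hSplitM : ∀ Ss : Set V, ktcFeas t W Set.univ R S Ss → v ∉ Ss →
      ktcFeas t W R' (R ∪ {v}) S (Ss ∩ R') ∧ ktcFeas t W L R S (Ss ∩ L) ∧
        (Ss ∩ R').ncard + (Ss ∩ L).ncard = Ss.ncard + sb := by
    intro Ss hfeas hvSs
    obtain ⟨hU, hSsub⟩ := hSplitCommon Ss hfeas
    obtain ⟨h1, h2, h3, h4⟩ := hfeas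
    have hI : (Ss ∩ R') ∩ (Ss ∩ L) = S ∩ L ∩ R' := by
      ext x
      constructor
      · rintro ⟨⟨hx, hxR'⟩, ⟨-, hxL⟩⟩
        have hxv : x ≠ v := fun hc => hvSs (hc ▸ hx)
        rcases hBcl x hxL hxR' hxv with hxR | hxS
        · exact (((Set.eq_empty_iff_forall_notMem.mp h3)) x ⟨hx, hxR⟩).elim
        · exact ⟨⟨hxS, hxL⟩, hxR'⟩
      · rintro ⟨⟨hxS, hxL⟩, hxR'⟩
        exact ⟨⟨hSsub hxS, hxR'⟩, ⟨hSsub hxS, hxL⟩⟩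
    refine ⟨⟨Set.inter_subset_right, ?_, ?_, ?_⟩, ⟨Set.inter_subset_right, ?_, ?_, ?_⟩, ?_⟩
    · rintro x ⟨hx, hxR'⟩
      exact ⟨hSsub hx, hxR'⟩
    · rw [Set.eq_empty_iff_forall_notMem]
      rintro x ⟨⟨hx, hxR'⟩, hxR | hxv⟩
      · exact (Set.eq_empty_iff_forall_notMem.mp h3) x ⟨hx, hxR⟩
      · exact hvSs (hxv ▸ hx)
    · have hss : R' \ (Ss ∩ R') ⊆ Set.univ \ Ss :=
        fun x hx => ⟨Set.mem_univ x, fun hc => hx.2 ⟨hc, hx.1⟩⟩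
      exact ktc_cf_mono W t hss h4
    · rintro x ⟨hx, hxL⟩
      exact ⟨hSsub hx, hxL⟩
    · rw [Set.eq_empty_iff_forall_notMem]
      rintro x ⟨⟨hx, -⟩, hxR⟩
      exact (Set.eq_empty_iff_forall_notMem.mp h3) x ⟨hx, hxR⟩
    · have hss : L \ (Ss ∩ L) ⊆ Set.univ \ Ss :=
        fun x hx => ⟨Set.mem_univ x, fun hc => hx.2 ⟨hc, hx.1⟩⟩
      exact ktc_cf_mono W t hss h4
    · have hcard := Set.ncard_union_add_ncard_inter (Ss ∩ R') (Ss ∩ L)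
        (Set.toFinite _) (Set.toFinite _)
      rw [hU, hI] at hcard
      omega
  refine ⟨part1, ?_, ?_⟩
  -- case gP ≤ gM
  · intro hle
    have hkey : ktCoverOpt t W Set.univ R S + ((sb : ℕ∞) + 1) =
        ktCoverOpt t W R' R (S ∪ {v}) + ktCoverOpt t W L R (S ∪ {v}) := by
      apply le_antisymm
      · by_cases hgtop : ktCoverOpt t W R' R (S ∪ {v}) = ⊤
        · rw [hgtop, top_add]; exact le_top
        by_cases hftop : ktCoverOpt t W L R (S ∪ {v}) = ⊤
        · rw [hftop, add_top]; exact le_top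
        obtain ⟨Sg, hSg, hgeq⟩ := ktcOpt_attain hgtop
        obtain ⟨Sf, hSf, hfeq⟩ := ktcOpt_attain hftop
        obtain ⟨hfeas, hcard⟩ := hT4 Sg Sf hSg hSf
        calc ktCoverOpt t W Set.univ R S + ((sb : ℕ∞) + 1)
            ≤ ((Sg ∪ Sf).ncard : ℕ∞) + ((sb : ℕ∞) + 1) :=
              add_le_add (ktcOpt_le hfeas) le_rfl
          _ = (((Sg ∪ Sf).ncard + (sb + 1) : ℕ) : ℕ∞) := by push_cast; ring
          _ = ((Sg.ncard + Sf.ncard : ℕ) : ℕ∞) := by rw [hcard]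
          _ = ktCoverOpt t W R' R (S ∪ {v}) + ktCoverOpt t W L R (S ∪ {v}) := by
              rw [hgeq, hfeq]; push_cast; ring
      · apply ktc_le_add
        intro Ss hfeas
        by_cases hvSs : v ∈ Ss
        · obtain ⟨hg, hf, hcard⟩ := hSplitP Ss hfeas hvSs
          calc ktCoverOpt t W R' R (S ∪ {v}) + ktCoverOpt t W L R (S ∪ {v})
              ≤ ((Ss ∩ R').ncard : ℕ∞) + ((Ss ∩ L).ncard : ℕ∞) :=
                add_le_add (ktcOpt_le hg) (ktcOpt_le hf)
            _ = (((Ss ∩ R').ncard + (Ss ∩ L).ncard : ℕ) : ℕ∞) := by push_cast; ring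
            _ = ((Ss.ncard + (sb + 1) : ℕ) : ℕ∞) := by rw [hcard]
            _ = (Ss.ncard : ℕ∞) + ((sb : ℕ∞) + 1) := by push_cast; ring
        · obtain ⟨hg, hf, hcard⟩ := hSplitM Ss hfeas hvSs
          calc ktCoverOpt t W R' R (S ∪ {v}) + ktCoverOpt t W L R (S ∪ {v})
              ≤ ktCoverOpt t W R' (R ∪ {v}) S + (ktCoverOpt t W L R S + 1) :=
                add_le_add hle hfP_le
            _ ≤ ((Ss ∩ R').ncard : ℕ∞) + (((Ss ∩ L).ncard : ℕ∞) + 1) :=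
                add_le_add (ktcOpt_le hg) (add_le_add (ktcOpt_le hf) le_rfl)
            _ = (((Ss ∩ R').ncard + (Ss ∩ L).ncard : ℕ) : ℕ∞) + 1 := by push_cast; ring
            _ = ((Ss.ncard + sb : ℕ) : ℕ∞) + 1 := by rw [hcard]
            _ = (Ss.ncard : ℕ∞) + ((sb : ℕ∞) + 1) := by push_cast; ring
    have hsub : ktCoverOpt t W R' R (S ∪ {v}) + ktCoverOpt t W L R (S ∪ {v})
        - ((sb : ℕ∞) + 1) = ktCoverOpt t W Set.univ R S := by
      rw [← hkey]
      have : ((sb : ℕ∞) + 1) = ((sb + 1 : ℕ) : ℕ∞) := by push_cast; ring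
      rw [this, ktc_add_cast_sub]
    rw [← hsub, tsub_tsub]
  -- case gM < gP
  · intro hgt
    push_neg at hgt
    have hgM_ne_top : ktCoverOpt t W R' (R ∪ {v}) S ≠ ⊤ := hgt.ne_top
    have hgadd : ktCoverOpt t W R' (R ∪ {v}) S + 1 ≤ ktCoverOpt t W R' R (S ∪ {v}) :=
      (ENat.add_one_le_iff hgM_ne_top).mpr hgt
    have hkey : ktCoverOpt t W Set.univ R S + (sb : ℕ∞) =
        ktCoverOpt t W R' (R ∪ {v}) S + ktCoverOpt t W L R S := by
      apply le_antisymm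
      · by_cases hgtop : ktCoverOpt t W R' (R ∪ {v}) S = ⊤
        · rw [hgtop, top_add]; exact le_top
        by_cases hftop : ktCoverOpt t W L R S = ⊤
        · rw [hftop, add_top]; exact le_top
        obtain ⟨Sg, hSg, hgeq⟩ := ktcOpt_attain hgtop
        obtain ⟨Sf, hSf, hfeq⟩ := ktcOpt_attain hftop
        obtain ⟨hfeas, hcard⟩ := hT5 Sg Sf hSg hSf
        calc ktCoverOpt t W Set.univ R S + (sb : ℕ∞)
            ≤ ((Sg ∪ Sf).ncard : ℕ∞) + (sb : ℕ∞) :=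
              add_le_add (ktcOpt_le hfeas) le_rfl
          _ = (((Sg ∪ Sf).ncard + sb : ℕ) : ℕ∞) := by push_cast; ring
          _ = ((Sg.ncard + Sf.ncard : ℕ) : ℕ∞) := by rw [hcard]
          _ = ktCoverOpt t W R' (R ∪ {v}) S + ktCoverOpt t W L R S := by
              rw [hgeq, hfeq]; push_cast; ring
      · apply ktc_le_add
        intro Ss hfeas
        by_cases hvSs : v ∈ Ss
        · obtain ⟨hg, hf, hcard⟩ := hSplitP Ss hfeas hvSs
          have hchain : ktCoverOpt t W R' (R ∪ {v}) S + ktCoverOpt t W L R S + 1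
              ≤ (Ss.ncard : ℕ∞) + (sb : ℕ∞) + 1 := by
            calc ktCoverOpt t W R' (R ∪ {v}) S + ktCoverOpt t W L R S + 1
                = (ktCoverOpt t W R' (R ∪ {v}) S + 1) + ktCoverOpt t W L R S := by ring
              _ ≤ ktCoverOpt t W R' R (S ∪ {v}) + ktCoverOpt t W L R (S ∪ {v}) :=
                  add_le_add hgadd hfM_le
              _ ≤ ((Ss ∩ R').ncard : ℕ∞) + ((Ss ∩ L).ncard : ℕ∞) :=
                  add_le_add (ktcOpt_le hg) (ktcOpt_le hf)
              _ = (((Ss ∩ R').ncard + (Ss ∩ L).ncard : ℕ) : ℕ∞) := by push_cast; ring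
              _ = ((Ss.ncard + (sb + 1) : ℕ) : ℕ∞) := by rw [hcard]
              _ = (Ss.ncard : ℕ∞) + (sb : ℕ∞) + 1 := by push_cast; ring
          have hcan : ∀ a b : ℕ∞, a + 1 ≤ b + 1 → a ≤ b := by
            intro a b hab
            induction b using ENat.recTopCoe with
            | top => exact le_top
            | coe m =>
              induction a using ENat.recTopCoe with
              | top =>
                rw [top_add, top_le_iff] at hab
                exact absurd hab (by exact_mod_cast ENat.coe_ne_top (m + 1))
              | coe n =>
                have hnm : (n : ℕ) + 1 ≤ m + 1 := by exact_mod_cast hab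
                exact_mod_cast Nat.le_of_succ_le_succ hnm
          exact hcan _ _ hchain
        · obtain ⟨hg, hf, hcard⟩ := hSplitM Ss hfeas hvSs
          calc ktCoverOpt t W R' (R ∪ {v}) S + ktCoverOpt t W L R S
              ≤ ((Ss ∩ R').ncard : ℕ∞) + ((Ss ∩ L).ncard : ℕ∞) :=
                add_le_add (ktcOpt_le hg) (ktcOpt_le hf)
            _ = (((Ss ∩ R').ncard + (Ss ∩ L).ncard : ℕ) : ℕ∞) := by push_cast; ring
            _ = ((Ss.ncard + sb : ℕ) : ℕ∞) := by rw [hcard]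
            _ = (Ss.ncard : ℕ∞) + (sb : ℕ∞) := by push_cast; ring
    have hsub : ktCoverOpt t W R' (R ∪ {v}) S + ktCoverOpt t W L R S
        - (sb : ℕ∞) = ktCoverOpt t W Set.univ R S := by
      rw [← hkey, ktc_add_cast_sub]
    rw [← hsub]
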